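/- arXiv:2306.00746 — 3 statements merged into one kernel-verified Lean document; each statement's English description precedes it below -/
import Mathlib

section
/- Let Γ be a group acting properly, isometrically and cocompactly on a proper CAT(0) space X with relatively compact fundamental domain D, let v ∈ Γ be of finite order with fixed-point set X^v ≠ ∅, and let Z_v be the centralizer of v. Then the set Δ_0(Γ,v) = { g ∈ Γ : g·D ∩ X^v ≠ ∅ } is stable under left multiplication by Z_v and is the union of finitely many Z_v-orbits. -/
/-- A CAT(0) structure on a metric space `X`: a choice of geodesics `geo x y : [0,1] → X`
from `x` to `y`, parametrized proportionally to arc length, satisfying the CN comparison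
inequality. -/
structure GeodesicCAT0 (X : Type*) [MetricSpace X] where
  geo : X → X → ℝ → X
  geo_zero : ∀ x y, geo x y 0 = x
  geo_one : ∀ x y, geo x y 1 = y
  dist_geo : ∀ x y : X, ∀ s ∈ Set.Icc (0:ℝ) 1, ∀ t ∈ Set.Icc (0:ℝ) 1,
    dist (geo x y s) (geo x y t) = |s - t| * dist x y
  cn : ∀ x y z : X, ∀ t ∈ Set.Icc (0:ℝ) 1,
    dist z (geo x y t) ^ 2 ≤
      (1 - t) * dist z x ^ 2 + t * dist z y ^ 2 - t * (1 - t) * dist x y ^ 2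

/-- Let `Γ` act properly, isometrically and cocompactly on a proper CAT(0) space `X`, with
relatively compact fundamental domain `D` (every orbit meets `D` in exactly one point).
Let `v ∈ Γ` have finite order with nonempty fixed-point set `X^v`, and let `Z_v` be the
centralizer of `v`.  Then `Δ₀(Γ,v) = {g : g·D ∩ X^v ≠ ∅}` is stable under left
multiplication by `Z_v` and is a union of finitely many `Z_v`-orbits. -/
theorem delta_zero_finitely_many_orbits {X : Type*} [MetricSpace X] [ProperSpace X]
    (H : GeodesicCAT0 X) {Γ : Type*} [Group Γ] [MulAction Γ X]
    (hiso : ∀ g : Γ, Isometry fun x : X => g • x)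
    (hproper : ∀ K : Set X, IsCompact K →
      Set.Finite {g : Γ | ((fun x => g • x) '' K ∩ K).Nonempty})
    (hcocompact : ∃ K : Set X, IsCompact K ∧ ∀ x : X, ∃ g : Γ, g • x ∈ K)
    (D : Set X) (hDb : Bornology.IsBounded D)
    (hfund : ∀ x : X, ∃! y : X, y ∈ D ∧ ∃ g : Γ, g • x = y)
    (v : Γ) (hv : IsOfFinOrder v)
    (hXv : {x : X | v • x = x}.Nonempty) :
    (∀ z ∈ Subgroup.centralizer ({v} : Set Γ), ∀ g : Γ,
        ((fun x => g • x) '' D ∩ {x : X | v • x = x}).Nonempty →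
        ((fun x => (z * g) • x) '' D ∩ {x : X | v • x = x}).Nonempty) ∧
      ∃ S : Finset Γ, ∀ g : Γ,
        ((fun x => g • x) '' D ∩ {x : X | v • x = x}).Nonempty →
        ∃ z ∈ Subgroup.centralizer ({v} : Set Γ), ∃ s ∈ S, g = z * s := by
  classical
  constructor
  · rintro z hz g ⟨y, ⟨x, hxD, rfl⟩, hyfix⟩
    have hzv : v * z = z * v := Subgroup.mem_centralizer_iff.mp hz v rfl
    refine ⟨(z * g) • x, ⟨x, hxD, rfl⟩, ?_⟩
    show v • (z * g) • x = (z * g) • x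
    have : v * (z * g) = z * (v * (g : Γ)) := by
      rw [← mul_assoc, hzv, mul_assoc]
    calc v • (z * g) • x = (v * (z * g)) • x := (mul_smul _ _ _).symm
      _ = z • (v • g • x) := by rw [this, mul_smul, mul_smul]
      _ = (z * g) • x := by rw [hyfix, mul_smul]
  · -- finiteness
    set K : Set X := closure D with hK
    have hKc : IsCompact K := hDb.isCompact_closure
    have hF : Set.Finite {w : Γ | ((fun x => w • x) '' K ∩ K).Nonempty} :=
      hproper K hKc
    set rep : Γ → Γ := fun w => if h : ∃ g : Γ, g⁻¹ * v * g = w then h.choose else 1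
      with hrep
    refine ⟨hF.toFinset.image rep, ?_⟩
    rintro g ⟨y, ⟨x, hxD, rfl⟩, hyfix⟩
    set w : Γ := g⁻¹ * v * g with hw
    have hxfix : w • x = x := by
      have : v • g • x = g • x := hyfix
      calc w • x = g⁻¹ • v • g • x := by rw [hw, mul_smul, mul_smul]
        _ = g⁻¹ • g • x := by rw [this]
        _ = x := inv_smul_smul g x
    have hwF : w ∈ {w : Γ | ((fun x => w • x) '' K ∩ K).Nonempty} :=
      ⟨x, ⟨x, subset_closure hxD, hxfix⟩, subset_closure hxD⟩
    have hex : ∃ g' : Γ, g'⁻¹ * v * g' = w := ⟨g, rfl⟩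
    set s : Γ := rep w with hs
    have hsspec : s⁻¹ * v * s = w := by
      rw [hs, hrep]; simp only [dif_pos hex]; exact hex.choose_spec
    have hsS : s ∈ hF.toFinset.image rep :=
      Finset.mem_image.mpr ⟨w, hF.mem_toFinset.mpr hwF, rfl⟩
    refine ⟨g * s⁻¹, ?_, s, hsS, by group⟩
    refine Subgroup.mem_centralizer_iff.mpr ?_
    rintro u rfl
    have h1 : s⁻¹ * u * s = g⁻¹ * u * g := hsspec
    calc u * (g * s⁻¹) = g * (g⁻¹ * u * g) * s⁻¹ := by group
      _ = g * (s⁻¹ * u * s) * s⁻¹ := by rw [h1]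
      _ = g * s⁻¹ * u := by group
end

section
/- Let Γ act properly, isometrically and cocompactly on a complete CAT(0) space X. Then the infimum over all elements v ∈ Γ of infinite order of the stable length ℓ_s(v) = inf_{y∈X} d(y, vy) is strictly positive. -/
open Function Filter Topology

/-- From a family of infinite sets, select an injective sequence with `g n ∈ F n`. -/
lemma exists_injective_seq_mem {α : Type*} (F : ℕ → Set α) (h : ∀ n, (F n).Infinite) :
    ∃ g : ℕ → α, Function.Injective g ∧ ∀ n, g n ∈ F n := by
  classical
  have key : ∀ (s : Finset α) (n : ℕ), ∃ x, x ∈ F n ∧ x ∉ s := by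
    intro s n
    obtain ⟨x, hx⟩ := ((h n).diff s.finite_toSet).nonempty
    exact ⟨x, hx.1, hx.2⟩
  choose pick hpick1 hpick2 using key
  let S : ℕ → Finset α := fun n => Nat.rec ∅ (fun k s => insert (pick s k) s) n
  have hS : ∀ n, S (n + 1) = insert (pick (S n) n) (S n) := fun n => rfl
  set g : ℕ → α := fun n => pick (S n) n with hg
  have hmem : ∀ n, g n ∈ S (n + 1) := by
    intro n; rw [hS]; exact Finset.mem_insert_self _ _
  have hmono : ∀ m n, m ≤ n → S m ⊆ S n := by
    intro m n hmn
    induction n, hmn using Nat.le_induction with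
    | base => exact subset_rfl
    | succ n hmn ih => rw [hS]; exact ih.trans (Finset.subset_insert _ _)
  have hginj : Injective g := by
    intro m n hmn
    by_contra hne
    rcases Nat.lt_or_ge m n with hlt | hge
    · have h1 : g m ∈ S n := hmono (m + 1) n hlt (hmem m)
      rw [hmn] at h1
      exact hpick2 (S n) n h1
    · have hlt : n < m := lt_of_le_of_ne hge (Ne.symm hne)
      have h1 : g n ∈ S m := hmono (n + 1) m hlt (hmem n)
      rw [← hmn] at h1
      exact hpick2 (S m) m h1
  exact ⟨g, hginj, fun n => hpick1 (S n) n⟩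

/-- Let `Γ` act properly, isometrically and cocompactly on a complete CAT(0) space `X`.
Then the infimum, over the elements `v ∈ Γ` of infinite order, of the stable lengths
`ℓ_s(v) = inf_y d(y, v·y)` is strictly positive: there is a `c > 0` with `c ≤ d(y, v·y)`
for every `y ∈ X` and every `v ∈ Γ` of infinite order. -/
theorem stable_length_uniformly_positive {X : Type*} [MetricSpace X] [Nonempty X]
    [CompleteSpace X] (H : GeodesicCAT0 X)
    {Γ : Type*} [Group Γ] [MulAction Γ X]
    (hiso : ∀ g : Γ, Isometry fun x : X => g • x)
    (hproper : ∀ K : Set X, IsCompact K →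
      Set.Finite {g : Γ | ((fun x => g • x) '' K ∩ K).Nonempty})
    (hcocompact : ∃ K : Set X, IsCompact K ∧ ∀ x : X, ∃ g : Γ, g • x ∈ K) :
    ∃ c : ℝ, 0 < c ∧ ∀ v : Γ, ¬ IsOfFinOrder v → ∀ y : X, c ≤ dist y (v • y) := by
  classical
  obtain ⟨K, hK, hKcov⟩ := hcocompact
  obtain ⟨x0⟩ := ‹Nonempty X›
  obtain ⟨g0, hg0⟩ := hKcov x0
  have hKne : K.Nonempty := ⟨g0 • x0, hg0⟩
  -- Step 1: a fixed point of any element forces finite order.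
  have lemB : ∀ (w : Γ) (z : X), w • z = z → IsOfFinOrder w := by
    intro w z hz
    have hfin : Set.Finite {g : Γ | ((fun x => g • x) '' {z} ∩ {z}).Nonempty} :=
      hproper {z} isCompact_singleton
    have hpowfix : ∀ n : ℕ, w ^ n • z = z := by
      intro n
      induction n with
      | zero => simp
      | succ n ih => rw [pow_succ, mul_smul, hz, ih]
    have hmem : ∀ n : ℕ, w ^ n ∈ {g : Γ | ((fun x => g • x) '' {z} ∩ {z}).Nonempty} := by
      intro n
      exact ⟨z, ⟨z, rfl, hpowfix n⟩, rfl⟩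
    have : ¬ Function.Injective (fun n : ℕ => w ^ n) := by
      intro hinj
      exact (Set.infinite_of_injective_forall_mem hinj hmem) hfin
    rw [Function.not_injective_iff] at this
    obtain ⟨m, n, hmn, hne⟩ := this
    rcases hne.lt_or_gt with hlt | hlt
    · refine isOfFinOrder_iff_pow_eq_one.mpr ⟨n - m, Nat.sub_pos_of_lt hlt, ?_⟩
      have : w ^ m * w ^ (n - m) = w ^ m * 1 := by
        rw [← pow_add, Nat.add_sub_cancel' hlt.le, mul_one, hmn]
      exact mul_left_cancel this
    · refine isOfFinOrder_iff_pow_eq_one.mpr ⟨m - n, Nat.sub_pos_of_lt hlt, ?_⟩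
      have : w ^ n * w ^ (m - n) = w ^ n * 1 := by
        rw [← pow_add, Nat.add_sub_cancel' hlt.le, mul_one, ← hmn]
      exact mul_left_cancel this
  -- Step 2: there is `ε > 0` such that only finitely many `g` move some point of `K`
  -- by at most `ε`.
  have lemA : ∃ ε : ℝ, 0 < ε ∧
      Set.Finite {g : Γ | ∃ y ∈ K, dist y (g • y) ≤ ε} := by
    by_contra hcon
    push_neg at hcon
    have hinf : ∀ n : ℕ, Set.Infinite
        {g : Γ | ∃ y ∈ K, dist y (g • y) ≤ 1 / (n + 1)} := by
      intro n
      have hpos : (0:ℝ) < 1 / (n + 1) := by positivity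
      intro hfin
      exact (hcon _ hpos) hfin
    obtain ⟨g, hginj, hgmem⟩ := exists_injective_seq_mem _ hinf
    choose y hyK hyd using hgmem
    obtain ⟨a, haK, φ, hφ, hconv⟩ := hK.tendsto_subseq hyK
    -- the sequence `g (φ k) • a` tends to `a`
    have hdist : Tendsto (fun k => dist (g (φ k) • a) a) atTop (𝓝 0) := by
      have hb : ∀ k, dist (g (φ k) • a) a ≤
          2 * dist (y (φ k)) a + 1 / (φ k + 1) := by
        intro k
        have h1 : dist (g (φ k) • a) (g (φ k) • y (φ k)) = dist a (y (φ k)) :=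
          (hiso (g (φ k))).dist_eq a (y (φ k))
        calc dist (g (φ k) • a) a
            ≤ dist (g (φ k) • a) (g (φ k) • y (φ k)) +
              dist (g (φ k) • y (φ k)) (y (φ k)) + dist (y (φ k)) a :=
              dist_triangle4 _ _ _ _
          _ ≤ dist a (y (φ k)) + 1 / (φ k + 1) + dist (y (φ k)) a := by
              rw [h1]
              have := hyd (φ k)
              rw [dist_comm] at this
              linarith
          _ = 2 * dist (y (φ k)) a + 1 / (φ k + 1) := by
              rw [dist_comm a (y (φ k))]; ring
      have h2 : Tendsto (fun k => dist (y (φ k)) a) atTop (𝓝 0) :=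
        tendsto_iff_dist_tendsto_zero.mp hconv
      have h3 : Tendsto (fun k : ℕ => 1 / ((φ k : ℝ) + 1)) atTop (𝓝 0) :=
        tendsto_one_div_add_atTop_nhds_zero_nat.comp hφ.tendsto_atTop
      have h4 : Tendsto (fun k => 2 * dist (y (φ k)) a + 1 / ((φ k : ℝ) + 1))
          atTop (𝓝 0) := by
        have := (h2.const_mul 2).add h3
        simpa using this
      exact squeeze_zero (fun k => dist_nonneg) hb h4
    have hconv2 : Tendsto (fun k => g (φ k) • a) atTop (𝓝 a) :=
      tendsto_iff_dist_tendsto_zero.mpr hdist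
    set C : Set X := K ∪ insert a (Set.range fun k => g (φ k) • a) with hC
    have hCcomp : IsCompact C := hK.union hconv2.isCompact_insert_range
    have hCmem : ∀ k : ℕ, g (φ k) ∈
        {h : Γ | ((fun x => h • x) '' C ∩ C).Nonempty} := by
      intro k
      refine ⟨g (φ k) • a, ⟨a, Or.inl haK, rfl⟩, ?_⟩
      exact Or.inr (Set.mem_insert_of_mem _ ⟨k, rfl⟩)
    have hinj2 : Function.Injective fun k => g (φ k) :=
      hginj.comp hφ.injective
    exact (Set.infinite_of_injective_forall_mem hinj2 hCmem) (hproper C hCcomp)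
  obtain ⟨ε, hε, hF⟩ := lemA
  set F : Set Γ := {g : Γ | ∃ y ∈ K, dist y (g • y) ≤ ε} with hFdef
  -- Step 3: for each infinite-order element, the displacement on `K` has a positive minimum.
  have hb : ∀ w : Γ, ∃ b : ℝ, ¬ IsOfFinOrder w →
      0 < b ∧ ∀ z ∈ K, b ≤ dist z (w • z) := by
    intro w
    by_cases hw : IsOfFinOrder w
    · exact ⟨1, fun h => absurd hw h⟩
    · have hcont : ContinuousOn (fun z : X => dist z (w • z)) K :=
        (continuous_id.dist (hiso w).continuous).continuousOn
      obtain ⟨z0, hz0K, hz0⟩ := hK.exists_isMinOn hKne hcont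
      refine ⟨dist z0 (w • z0), fun _ => ⟨?_, fun z hz => hz0 hz⟩⟩
      rcases (dist_nonneg (x := z0) (y := w • z0)).lt_or_eq with h | h
      · exact h
      · exfalso
        exact hw (lemB w z0 (dist_eq_zero.mp h.symm).symm)
  choose bfun hbfun using hb
  -- Assemble the constant.
  set T : Finset Γ := hF.toFinset.filter (fun w => ¬ IsOfFinOrder w) with hT
  set S : Finset ℝ := insert ε (T.image bfun) with hSdef
  have hSne : S.Nonempty := ⟨ε, Finset.mem_insert_self _ _⟩
  refine ⟨S.min' hSne, ?_, ?_⟩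
  · rw [Finset.lt_min'_iff]
    intro r hr
    rcases Finset.mem_insert.mp hr with h | h
    · exact h ▸ hε
    · obtain ⟨w, hwT, hwr⟩ := Finset.mem_image.mp h
      have hw : ¬ IsOfFinOrder w := (Finset.mem_filter.mp hwT).2
      exact hwr ▸ (hbfun w hw).1
  · intro v hv y
    by_contra hlt
    push_neg at hlt
    obtain ⟨g, hg⟩ := hKcov y
    set w : Γ := g * v * g⁻¹ with hw
    set z : X := g • y with hz
    have hwz : w • z = g • (v • y) := by
      rw [hw, hz, smul_smul, smul_smul]
      congr 1
      group
    have hdisp : dist z (w • z) = dist y (v • y) := by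
      rw [hwz, hz]
      exact (hiso g).dist_eq y (v • y)
    have hcε : S.min' hSne ≤ ε := Finset.min'_le _ _ (Finset.mem_insert_self _ _)
    have hwF : w ∈ F := ⟨z, hg, by rw [hdisp]; linarith⟩
    have hwinf : ¬ IsOfFinOrder w := by
      intro hfin
      apply hv
      obtain ⟨n, hn, hpow⟩ := isOfFinOrder_iff_pow_eq_one.mp hfin
      refine isOfFinOrder_iff_pow_eq_one.mpr ⟨n, hn, ?_⟩
      have : (g * v * g⁻¹) ^ n = g * v ^ n * g⁻¹ := conj_pow
      rw [hw, this] at hpow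
      have : v ^ n = g⁻¹ * 1 * g := by
        rw [← hpow]; group
      rw [this]; group
    have hwT : w ∈ T := Finset.mem_filter.mpr ⟨hF.mem_toFinset.mpr hwF, hwinf⟩
    have hbS : bfun w ∈ S :=
      Finset.mem_insert_of_mem (Finset.mem_image_of_mem _ hwT)
    have h1 : S.min' hSne ≤ bfun w := Finset.min'_le _ _ hbS
    have h2 : bfun w ≤ dist z (w • z) := (hbfun w hwinf).2 z hg
    rw [hdisp] at h2
    linarith
end

section
/- Let A be a unital complex algebra and τ : A → ℂ a trace (τ(ab) = τ(ba)). For another unital complex algebra B, the slant product map \τ : Ω^n(A ⊗ B) → Ω^n(B) defined by (a_0⊗b_0) d(a_1⊗b_1) … d(a_n⊗b_n) ↦ τ(a_0 a_1 ⋯ a_n) · b_0 db_1 … db_n commutes with the Hochschild boundary b, i.e. it is a map of Hochschild complexes. -/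
section

variable {R : Type*} [Ring R]

/-- The degree-`n` part of the space of noncommutative forms of a unital `ℂ`-algebra `R`,
modeled on the generators: the tuple `(a₀,…,aₙ)` stands for the form `a₀ da₁ … daₙ`. -/
abbrev NCForms (R : Type*) (n : ℕ) : Type _ := (Fin (n + 1) → R) →₀ ℂ

/-- Merge the `i`-th and `(i+1)`-st entries of a tuple by multiplying them. -/
def mulAt {n : ℕ} (a : Fin (n + 2) → R) (i : Fin (n + 1)) : Fin (n + 1) → R := fun j =>
  if (j : ℕ) < (i : ℕ) then a j.castSucc
  else if j = i then a j.castSucc * a j.succ else a j.succ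

/-- The tuple `(a_{n+1}·a₀, a₁, …, aₙ)` appearing in the last term of the Hochschild
boundary. -/
def rotMul {n : ℕ} (a : Fin (n + 2) → R) : Fin (n + 1) → R := fun j =>
  if (j : ℕ) = 0 then a (Fin.last (n + 1)) * a 0 else a j.castSucc

/-- The Hochschild boundary
`b(a₀ da₁ … da_{n+1}) = Σ_{i=0}^{n} (−1)ⁱ a₀ da₁ … d(a_i a_{i+1}) … da_{n+1}
  + (−1)^{n+1} a_{n+1} a₀ da₁ … daₙ`. -/
noncomputable def hochschildB (n : ℕ) : NCForms R (n + 1) → NCForms R n := fun ω =>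
  ω.sum fun a c => c •
    ((∑ i : Fin (n + 1), ((-1 : ℂ) ^ (i : ℕ)) • Finsupp.single (mulAt a i) 1) +
      ((-1 : ℂ) ^ (n + 1) • Finsupp.single (rotMul a) 1))

end

/-- The slant product with a trace `τ` on `A`:
`(a₀⊗b₀) d(a₁⊗b₁) … d(aₙ⊗bₙ) ↦ τ(a₀a₁⋯aₙ) · b₀ db₁ … dbₙ`.
Elementary tensors `a ⊗ b ∈ A ⊗ B` are modeled as pairs `(a, b) ∈ A × B`, with the
componentwise product `(a⊗b)(a'⊗b') = aa' ⊗ bb'`. -/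
noncomputable def slant {A B : Type*} [Ring A] [Ring B] (τ : A → ℂ) (n : ℕ) :
    NCForms (A × B) n → NCForms B n := fun ω =>
  ω.sum fun w c =>
    (c * τ (List.ofFn fun i => (w i).1).prod) • Finsupp.single (fun i => (w i).2) 1

section Aux

variable {M : Type*} [Ring M]

lemma mulAt_zero {n : ℕ} (a : Fin (n + 2) → M) :
    mulAt a 0 = Fin.cons (a 0 * a 1) (fun k : Fin n => a k.succ.succ) := by
  funext k
  refine Fin.cases ?_ (fun m => ?_) k
  · simp [mulAt]
  · simp [mulAt, Fin.succ_ne_zero]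

lemma mulAt_succ {n : ℕ} (a : Fin (n + 3) → M) (j : Fin (n + 1)) :
    mulAt a j.succ = Fin.cons (a 0) (mulAt (fun k => a k.succ) j) := by
  funext k
  refine Fin.cases ?_ (fun m => ?_) k
  · simp [mulAt, Fin.pos_iff_ne_zero, Fin.succ_ne_zero]
  · simp only [mulAt, Fin.cons_succ, Fin.val_succ, Nat.add_lt_add_iff_right,
      Fin.succ_inj, Fin.succ_castSucc]

lemma prod_mulAt : ∀ {n : ℕ} (a : Fin (n + 2) → M) (i : Fin (n + 1)),
    (List.ofFn (mulAt a i)).prod = (List.ofFn a).prod := by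
  intro n
  induction n with
  | zero =>
    intro a i
    fin_cases i
    simp [mulAt_zero, List.ofFn_succ, mul_assoc]
  | succ n ih =>
    intro a i
    refine Fin.cases ?_ (fun j => ?_) i
    · rw [mulAt_zero]
      simp [List.ofFn_succ, mul_assoc]
    · rw [mulAt_succ]
      rw [List.ofFn_succ (f := Fin.cons (a 0) (mulAt (fun k => a k.succ) j))]
      simp only [Fin.cons_zero, Fin.cons_succ, List.prod_cons]
      rw [ih (fun k => a k.succ) j]
      simp [List.ofFn_succ]

lemma prod_rotMul {n : ℕ} (a : Fin (n + 2) → M) :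
    (List.ofFn (rotMul a)).prod
      = a (Fin.last (n + 1)) * (List.ofFn fun j : Fin (n + 1) => a j.castSucc).prod := by
  rw [List.ofFn_succ (f := rotMul a), List.ofFn_succ (f := fun j : Fin (n+1) => a j.castSucc)]
  have h1 : rotMul a 0 = a (Fin.last (n + 1)) * a 0 := by simp [rotMul]
  have h2 : ∀ k : Fin n, rotMul a k.succ = a k.succ.castSucc := by
    intro k; simp [rotMul, Fin.succ_ne_zero]
  simp only [List.prod_cons, h1, h2]
  rw [Fin.castSucc_zero, mul_assoc]

lemma prod_eq_init_mul_last {n : ℕ} (a : Fin (n + 2) → M) :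
    (List.ofFn a).prod
      = (List.ofFn fun j : Fin (n + 1) => a j.castSucc).prod * a (Fin.last (n + 1)) := by
  rw [List.ofFn_succ' a]
  simp [mul_assoc]

end Aux

section Comp

variable {A B : Type*} [Ring A] [Ring B]

lemma mulAt_fst {n : ℕ} (w : Fin (n + 2) → A × B) (i : Fin (n + 1)) :
    (fun j => (mulAt w i j).1) = mulAt (fun k => (w k).1) i := by
  funext j
  simp [mulAt, apply_ite Prod.fst]

lemma mulAt_snd {n : ℕ} (w : Fin (n + 2) → A × B) (i : Fin (n + 1)) :
    (fun j => (mulAt w i j).2) = mulAt (fun k => (w k).2) i := by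
  funext j
  simp [mulAt, apply_ite Prod.snd]

lemma rotMul_fst {n : ℕ} (w : Fin (n + 2) → A × B) :
    (fun j => (rotMul w j).1) = rotMul (fun k => (w k).1) := by
  funext j
  simp [rotMul, apply_ite Prod.fst]

lemma rotMul_snd {n : ℕ} (w : Fin (n + 2) → A × B) :
    (fun j => (rotMul w j).2) = rotMul (fun k => (w k).2) := by
  funext j
  simp [rotMul, apply_ite Prod.snd]

end Comp

section Lin

noncomputable def slantL {A B : Type*} [Ring A] [Ring B] (τ : A → ℂ) (n : ℕ) :
    NCForms (A × B) n →ₗ[ℂ] NCForms B n :=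
  Finsupp.lsum ℂ fun w => LinearMap.toSpanSingleton ℂ _
    (τ (List.ofFn fun i => (w i).1).prod • Finsupp.single (fun i => (w i).2) (1 : ℂ))

lemma slant_eq_slantL {A B : Type*} [Ring A] [Ring B] (τ : A → ℂ) (n : ℕ) :
    slant τ n = ⇑(slantL (B := B) τ n) := by
  funext ω
  rw [slant, slantL, Finsupp.lsum_apply]
  refine Finsupp.sum_congr fun w _ => ?_
  rw [LinearMap.toSpanSingleton_apply, smul_smul]

noncomputable def hochschildBL {R : Type*} [Ring R] (n : ℕ) :
    NCForms R (n + 1) →ₗ[ℂ] NCForms R n :=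
  Finsupp.lsum ℂ fun a => LinearMap.toSpanSingleton ℂ _
    ((∑ i : Fin (n + 1), ((-1 : ℂ) ^ (i : ℕ)) • Finsupp.single (mulAt a i) 1) +
      ((-1 : ℂ) ^ (n + 1) • Finsupp.single (rotMul a) 1))

lemma hochschildB_eq {R : Type*} [Ring R] (n : ℕ) :
    hochschildB (R := R) n = ⇑(hochschildBL (R := R) n) := by
  funext ω
  rw [hochschildB, hochschildBL, Finsupp.lsum_apply]
  refine Finsupp.sum_congr fun w _ => ?_
  rw [LinearMap.toSpanSingleton_apply]

end Lin

lemma slantL_single {A B : Type*} [Ring A] [Ring B] (τ : A → ℂ) (n : ℕ)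
    (v : Fin (n + 1) → A × B) (e : ℂ) :
    slantL (B := B) τ n (Finsupp.single v e)
      = (e * τ (List.ofFn fun i => (v i).1).prod) • Finsupp.single (fun i => (v i).2) 1 := by
  rw [← slant_eq_slantL, slant, Finsupp.sum_single_index]
  simp

lemma hochschildBL_single {R : Type*} [Ring R] (n : ℕ) (a : Fin (n + 2) → R) (c : ℂ) :
    hochschildBL n (Finsupp.single a c)
      = c • ((∑ i : Fin (n + 1), ((-1 : ℂ) ^ (i : ℕ)) • Finsupp.single (mulAt a i) 1) +
          ((-1 : ℂ) ^ (n + 1) • Finsupp.single (rotMul a) 1)) := by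
  rw [← hochschildB_eq, hochschildB, Finsupp.sum_single_index]
  simp

/-- Let `A`, `B` be unital complex algebras and `τ : A → ℂ` a trace (`τ(xy) = τ(yx)`).
Then the slant product `\τ : Ω^n(A ⊗ B) → Ω^n(B)` commutes with the Hochschild boundary
`b`, i.e. it is a map of Hochschild complexes. -/
theorem slant_commutes_with_hochschild {A B : Type*}
    [Ring A] [Algebra ℂ A] [Ring B] [Algebra ℂ B]
    (τ : A → ℂ) (htrace : ∀ x y : A, τ (x * y) = τ (y * x)) :
    ∀ (n : ℕ) (ω : NCForms (A × B) (n + 1)),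
      slant τ n (hochschildB n ω) = hochschildB n (slant τ (n + 1) ω) := by
  intro n ω
  rw [slant_eq_slantL, hochschildB_eq, hochschildB_eq, slant_eq_slantL]
  suffices h : (slantL (B := B) τ n).comp (hochschildBL n)
      = (hochschildBL n).comp (slantL τ (n + 1)) by
    have := LinearMap.congr_fun h ω
    simpa using this
  apply Finsupp.lhom_ext
  intro w c
  have htr : τ (List.ofFn fun i => (rotMul w i).1).prod
      = τ (List.ofFn fun i => (w i).1).prod := by
    rw [rotMul_fst, prod_rotMul, htrace]
    exact congrArg τ (prod_eq_init_mul_last fun k => (w k).1).symm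
  have hm : ∀ i : Fin (n + 1),
      τ (List.ofFn fun j => (mulAt w i j).1).prod = τ (List.ofFn fun k => (w k).1).prod := by
    intro i
    rw [mulAt_fst]
    exact congrArg τ (prod_mulAt _ i)
  simp only [LinearMap.comp_apply, hochschildBL_single, slantL_single, map_smul, map_add,
    map_sum, one_mul]
  simp only [hm, htr, mulAt_snd, rotMul_snd, one_smul]
  simp only [Finsupp.smul_single, Finset.smul_sum, smul_add, smul_smul, smul_eq_mul, mul_one]
  exact congrArg₂ (· + ·) (Finset.sum_congr rfl fun x _ => congrArg _ (by ring))
    (congrArg _ (by ring))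
end
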